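/- arXiv:2306.00673 — 6 statements merged into one kernel-verified Lean document; each statement's English description precedes it below -/
import Mathlib

section
/- For the upper incomplete gamma function Γ(s, x) = ∫ₓ^∞ t^{s-1} e^{-t} dt, we have Γ(s, x) ≤ e^{-x}·(x + s)^{s-1} for all real s ≥ 1 and x ≥ 0. -/
open Real MeasureTheory Set Filter Topology

private lemma key_ineq (s t : ℝ) (hs : 1 ≤ s) (ht : 0 < t) :
    t ^ (s - 1) * Real.exp (-t) ≤
      Real.exp (-t) * ((t + s) ^ (s - 1) - (s - 1) * (t + s) ^ (s - 2)) := by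
  have hts : 0 < t + s := by linarith
  have hkey : t ^ (s - 1) ≤ (t + s) ^ (s - 2) * (t + 1) := by
    rcases le_total s 2 with h2 | h2
    · -- 1 ≤ s ≤ 2 : Bernoulli
      have hb : (1 + s / t) ^ (2 - s) ≤ 1 + (2 - s) * (s / t) :=
        rpow_one_add_le_one_add_mul_self
          (by have := div_nonneg (by linarith : (0:ℝ) ≤ s) ht.le; linarith)
          (by linarith) (by linarith)
      have h1 : t + s = t * (1 + s / t) := by field_simp
      have h2 : (t + s) ^ (2 - s) ≤ t ^ (2 - s) * (1 + (2 - s) * (s / t)) := by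
        rw [h1, Real.mul_rpow ht.le (by positivity)]
        exact mul_le_mul_of_nonneg_left hb (rpow_nonneg ht.le _)
      have h3 : (t + s) ^ (2 - s) * t ^ (s - 1) ≤ t + 1 := by
        calc (t + s) ^ (2 - s) * t ^ (s - 1)
            ≤ t ^ (2 - s) * (1 + (2 - s) * (s / t)) * t ^ (s - 1) :=
              mul_le_mul_of_nonneg_right h2 (rpow_nonneg ht.le _)
          _ = t ^ (2 - s) * t ^ (s - 1) * (1 + (2 - s) * (s / t)) := by ring
          _ = t * (1 + (2 - s) * (s / t)) := by
              rw [← Real.rpow_add ht, show 2 - s + (s - 1) = 1 by ring, Real.rpow_one]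
          _ = t + (2 - s) * s := by field_simp
          _ ≤ t + 1 := by nlinarith
      calc t ^ (s - 1)
          = (t + s) ^ (s - 2) * ((t + s) ^ (2 - s) * t ^ (s - 1)) := by
            rw [← mul_assoc, ← Real.rpow_add hts, show s - 2 + (2 - s) = 0 by ring,
              Real.rpow_zero, one_mul]
        _ ≤ (t + s) ^ (s - 2) * (t + 1) :=
            mul_le_mul_of_nonneg_left h3 (rpow_nonneg hts.le _)
    · -- 2 ≤ s
      have h1 : t ^ (s - 2) ≤ (t + s) ^ (s - 2) :=
        rpow_le_rpow ht.le (by linarith) (by linarith)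
      calc t ^ (s - 1) = t ^ (s - 2) * t := by
            rw [← Real.rpow_add_one ht.ne' (s - 2)]; ring_nf
        _ ≤ (t + s) ^ (s - 2) * (t + 1) := by
            apply mul_le_mul h1 (by linarith) ht.le (rpow_nonneg hts.le _)
  have e1 : (t + s) ^ (s - 1) = (t + s) ^ (s - 2) * (t + s) := by
    rw [← Real.rpow_add_one hts.ne' (s - 2)]; ring_nf
  have hexp : 0 < Real.exp (-t) := exp_pos _
  rw [mul_comm]
  apply mul_le_mul_of_nonneg_left _ hexp.le
  rw [e1]; nlinarith [rpow_nonneg hts.le (s-2)]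

theorem stmt4 (s x : ℝ) (hs : 1 ≤ s) (hx : 0 ≤ x) :
    ∫ t in Set.Ioi x, t ^ (s - 1) * Real.exp (-t) ≤
      Real.exp (-x) * (x + s) ^ (s - 1) := by
  set g : ℝ → ℝ := fun t => -(Real.exp (-t) * (t + s) ^ (s - 1)) with hgdef
  set G : ℝ → ℝ := fun t =>
    Real.exp (-t) * ((t + s) ^ (s - 1) - (s - 1) * (t + s) ^ (s - 2)) with hGdef
  have hderiv : ∀ t ∈ Ici x, HasDerivAt g (G t) t := by
    intro t ht
    have htx : x ≤ t := ht
    have hts : 0 < t + s := by linarith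
    have h1 : HasDerivAt (fun t : ℝ => Real.exp (-t)) (Real.exp (-t) * (-1)) t :=
      HasDerivAt.exp (hasDerivAt_neg t)
    have h2 : HasDerivAt (fun t : ℝ => (t + s) ^ (s - 1))
        (1 * (s - 1) * (t + s) ^ (s - 1 - 1)) t :=
      HasDerivAt.rpow_const ((hasDerivAt_id t).add_const s) (Or.inl hts.ne')
    have h3 : HasDerivAt g (-(Real.exp (-t) * -1 * (t + s) ^ (s - 1) +
        Real.exp (-t) * (1 * (s - 1) * (t + s) ^ (s - 1 - 1)))) t := (h1.mul h2).neg
    convert h3 using 1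
    rw [show s - 1 - 1 = s - 2 by ring]
    ring
  have hpos : ∀ t ∈ Ioi x, 0 ≤ G t := by
    intro t ht
    have htx : x < t := ht
    have hts : 0 < t + s := by linarith
    have e1 : (t + s) ^ (s - 1) = (t + s) ^ (s - 2) * (t + s) := by
      rw [← Real.rpow_add_one hts.ne' (s - 2)]; ring_nf
    have h4 : 0 ≤ (t + s) ^ (s - 2) := Real.rpow_nonneg hts.le _
    have h5 : 0 ≤ Real.exp (-t) := (Real.exp_pos _).le
    apply mul_nonneg h5
    rw [e1]; nlinarith
  have htends : Tendsto g atTop (𝓝 0) := by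
    have h0 : Tendsto (fun t : ℝ => (t + s) ^ (s - 1) * Real.exp (-1 * (t + s)) *
        Real.exp s) atTop (𝓝 (0 * Real.exp s)) :=
      ((tendsto_rpow_mul_exp_neg_mul_atTop_nhds_zero (s - 1) 1 one_pos).comp
        (tendsto_atTop_add_const_right atTop s tendsto_id)).mul_const _
    rw [zero_mul] at h0
    have heq : ∀ t : ℝ, (t + s) ^ (s - 1) * Real.exp (-1 * (t + s)) * Real.exp s =
        -g t := by
      intro t
      rw [hgdef, mul_assoc, ← Real.exp_add, show -1 * (t + s) + s = -t by ring]
      ring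
    have h1 : Tendsto (fun t => -g t) atTop (𝓝 0) := by
      rw [show (0:ℝ) = -(-0) by ring] at h0 ⊢
      exact h0.congr heq
    have := h1.neg
    rw [neg_zero] at this
    simpa using this
  have hint2 : IntegrableOn G (Ioi x) :=
    integrableOn_Ioi_deriv_of_nonneg' hderiv hpos htends
  have hint1 : IntegrableOn (fun t : ℝ => t ^ (s - 1) * Real.exp (-t)) (Ioi x) := by
    have := (Real.GammaIntegral_convergent (by linarith : (0:ℝ) < s)).mono_set
      (Ioi_subset_Ioi hx)
    exact this.congr_fun (fun t _ => mul_comm _ _) measurableSet_Ioi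
  have hkey : ∫ t in Ioi x, G t = 0 - g x :=
    integral_Ioi_of_hasDerivAt_of_nonneg' hderiv hpos htends
  calc ∫ t in Set.Ioi x, t ^ (s - 1) * Real.exp (-t)
      ≤ ∫ t in Set.Ioi x, G t :=
        setIntegral_mono_on hint1 hint2 measurableSet_Ioi
          (fun t ht => key_ineq s t hs (lt_of_le_of_lt hx ht))
    _ = 0 - g x := hkey
    _ = Real.exp (-x) * (x + s) ^ (s - 1) := by rw [hgdef]; ring
end

section
/- Let c₀ > 1, d ≥ 1 an integer, ρ > 0, τ ∈ (0, 1), and define Q(t) = exp(-(t/ρ)^{2/d}/c₀). Then ∫₀^∞ t · min{τ, Q(t)} dt ≤ ρ² · (c₀ log(1/τ) + c₀ d)^d · τ. -/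
open MeasureTheory Real Set Filter Topology

theorem stmt5 (c₀ : ℝ) (hc₀ : 1 < c₀) (d : ℕ) (hd : 1 ≤ d) (ρ τ : ℝ) (hρ : 0 < ρ)
    (hτ0 : 0 < τ) (hτ1 : τ < 1) :
    ∫ t in Set.Ioi (0 : ℝ), t * min τ (Real.exp (-((t / ρ) ^ (2 / (d : ℝ))) / c₀)) ≤
      ρ ^ 2 * (c₀ * Real.log (1 / τ) + c₀ * d) ^ d * τ := by
  have hc₀0 : (0:ℝ) < c₀ := by linarith
  have hd0 : (0:ℝ) < (d:ℝ) := by exact_mod_cast Nat.lt_of_lt_of_le Nat.zero_lt_one hd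
  have hdne : (d:ℝ) ≠ 0 := ne_of_gt hd0
  set b : ℝ := 2 / (d:ℝ) with hb_def
  have hb : 0 < b := by positivity
  set L : ℝ := Real.log (1/τ) with hLdef
  have hL : 0 < L := Real.log_pos (one_lt_one_div hτ0 hτ1)
  have hexpL : Real.exp (-L) = τ := by
    rw [hLdef, one_div, Real.log_inv, neg_neg, Real.exp_log hτ0]
  set f : ℝ → ℝ := fun t => t * min τ (Real.exp (-((t / ρ) ^ b) / c₀)) with hf_def
  set m : ℕ := d - 1 with hm_def
  have hdm : d = m + 1 := (Nat.succ_pred_eq_of_pos hd).symm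
  have hmcast : (m:ℝ) = (d:ℝ) - 1 := by rw [hdm]; push_cast; ring
  set v : ℝ → ℝ := fun t => (t/ρ) ^ b / c₀ with hv_def
  set C : ℝ := ρ^2 * ((d:ℝ)/2) * c₀^d with hC_def
  have hC : 0 < C := by positivity
  set Dv : ℝ → ℝ := fun t => b / (c₀ * ρ) * (t/ρ) ^ (b - 1) with hDv_def
  set F : ℝ → ℝ := fun t => -C * ((v t + (d:ℝ))^m * Real.exp (-(v t))) with hF_def
  set g : ℝ → ℝ := fun t => C * Dv t * Real.exp (-(v t)) *
      ((v t + (d:ℝ))^m - (m:ℝ) * (v t + (d:ℝ))^(m-1)) with hg_def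
  set t₀ : ℝ := ρ * (c₀ * L) ^ ((d:ℝ)/2) with ht₀_def
  have ht₀ : 0 < t₀ := by positivity
  have hfv : ∀ t, f t = t * min τ (Real.exp (-(v t))) := by
    intro t; simp only [hf_def, hv_def, neg_div]
  have ht₀ρ : t₀ / ρ = (c₀*L) ^ ((d:ℝ)/2) := by
    rw [ht₀_def, mul_div_assoc, mul_comm]
    field_simp
  have hvt₀ : v t₀ = L := by
    have h2 : ((d:ℝ)/2) * b = 1 := by rw [hb_def]; field_simp
    simp only [hv_def]
    rw [ht₀ρ, ← Real.rpow_mul (by positivity), h2, Real.rpow_one]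
    field_simp
  have ht₀sq : t₀^2 = ρ^2 * (c₀*L)^d := by
    rw [ht₀_def, mul_pow]
    congr 1
    rw [← Real.rpow_natCast ((c₀*L) ^ ((d:ℝ)/2)) 2, ← Real.rpow_mul (by positivity),
      show (d:ℝ)/2 * ((2:ℕ):ℝ) = (d:ℝ) by push_cast; ring, Real.rpow_natCast]
  -- continuity and nonnegativity of f
  have hf_cont : Continuous f := by
    simp only [hf_def]
    exact continuous_id.mul (continuous_const.min
      (Real.continuous_exp.comp
        ((((continuous_id.div_const ρ).rpow_const (fun x => Or.inr hb.le)).neg).div_const c₀)))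
  have hf_nonneg : ∀ t : ℝ, 0 ≤ t → 0 ≤ f t := by
    intro t ht
    simp only [hf_def]
    exact mul_nonneg ht (le_min hτ0.le (Real.exp_pos _).le)
  -- derivative of F
  have hderivF : ∀ t : ℝ, 0 < t → HasDerivAt F (g t) t := by
    intro t ht
    have htρ : 0 < t / ρ := div_pos ht hρ
    have h1 : HasDerivAt (fun x : ℝ => x / ρ) (1/ρ) t := (hasDerivAt_id t).div_const ρ
    have h2 : HasDerivAt (fun x : ℝ => (x/ρ) ^ b) (1/ρ * b * (t/ρ)^(b-1)) t :=
      h1.rpow_const (Or.inl (ne_of_gt htρ))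
    have hv' : HasDerivAt v (Dv t) t := by
      simp only [hv_def, hDv_def]
      exact (h2.div_const c₀).congr_deriv (by ring)
    have hw : HasDerivAt (fun x => (v x + (d:ℝ))^m) ((m:ℝ) * (v t + (d:ℝ))^(m-1) * Dv t) t :=
      (hv'.add_const (d:ℝ)).pow m
    have he : HasDerivAt (fun x => Real.exp (-(v x))) (Real.exp (-(v t)) * (-(Dv t))) t :=
      (hv'.neg).exp
    have hmain := (hw.mul he).const_mul (-C)
    simp only [hF_def, hg_def]
    exact hmain.congr_deriv (by ring)
  -- key polynomial inequality
  have hkey : ∀ x : ℝ, 0 ≤ x → x^m ≤ (x + (d:ℝ))^m - (m:ℝ) * (x + (d:ℝ))^(m-1) := by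
    intro x hx
    rcases Nat.eq_zero_or_pos m with hm0 | hmpos
    · simp [hm0]
    · obtain ⟨k, hk⟩ : ∃ k, m = k + 1 := ⟨m - 1, (Nat.succ_pred_eq_of_pos hmpos).symm⟩
      have hdk : (d:ℝ) = (k:ℝ) + 2 := by
        have h := hmcast; rw [hk] at h; push_cast at h; linarith
      rw [hk]
      have h1 : (x + (d:ℝ))^(k+1) - ((k+1:ℕ):ℝ) * (x + (d:ℝ))^(k+1-1)
          = (x + (d:ℝ))^k * (x+1) := by
        simp only [Nat.add_sub_cancel]
        rw [pow_succ, hdk]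
        push_cast
        ring
      rw [h1, pow_succ]
      have hxd : x ≤ x + (d:ℝ) := by linarith
      exact mul_le_mul (pow_le_pow_left₀ hx hxd k) (by linarith) hx (by positivity)
  have hg_nonneg : ∀ t : ℝ, 0 < t → 0 ≤ g t := by
    intro t ht
    have hvt : 0 ≤ v t := by
      simp only [hv_def]
      positivity
    have hbr : 0 ≤ (v t + (d:ℝ))^m - (m:ℝ) * (v t + (d:ℝ))^(m-1) :=
      le_trans (by positivity) (hkey (v t) hvt)
    have hDvt : 0 ≤ Dv t := by
      simp only [hDv_def]
      exact mul_nonneg (by positivity) (Real.rpow_nonneg (div_nonneg ht.le hρ.le) _)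
    simp only [hg_def]
    exact mul_nonneg (mul_nonneg (mul_nonneg hC.le hDvt) (Real.exp_pos _).le) hbr
  -- pointwise bound f ≤ g on (t₀, ∞)
  have hfg : ∀ t : ℝ, t₀ < t → f t ≤ g t := by
    intro t ht
    have ht0 : 0 < t := lt_trans ht₀ ht
    have htρ : 0 < t/ρ := div_pos ht0 hρ
    have hAB : (t/ρ)^(b-1) * ((t/ρ)^b)^m = t/ρ := by
      rw [← Real.rpow_natCast ((t/ρ)^b) m, ← Real.rpow_mul htρ.le, ← Real.rpow_add htρ,
        show b - 1 + b * (m:ℝ) = 1 by rw [hmcast, hb_def]; field_simp; ring, Real.rpow_one]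
    have hcd : c₀ ^ d = c₀ ^ m * c₀ := by rw [hdm, pow_succ]
    have hK : C * (b/(c₀*ρ)) / c₀^m = ρ := by
      rw [hC_def, hcd, hb_def]
      field_simp
    have hid : C * Dv t * (v t)^m = t := by
      have step : C * Dv t * (v t)^m
          = (C * (b/(c₀*ρ)) / c₀^m) * ((t/ρ)^(b-1) * ((t/ρ)^b)^m) := by
        simp only [hDv_def, hv_def, div_pow]
        ring
      rw [step, hK, hAB]
      field_simp
    have h1 : f t ≤ t * Real.exp (-(v t)) := by
      rw [hfv t]
      exact mul_le_mul_of_nonneg_left (min_le_right _ _) ht0.le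
    refine h1.trans ?_
    have hvt : 0 ≤ v t := by simp only [hv_def]; positivity
    have hDvt : 0 ≤ C * Dv t := by
      have : 0 ≤ Dv t := by
        simp only [hDv_def]
        exact mul_nonneg (by positivity) (Real.rpow_nonneg (div_nonneg ht0.le hρ.le) _)
      exact mul_nonneg hC.le this
    calc t * Real.exp (-(v t)) = (C * Dv t * (v t)^m) * Real.exp (-(v t)) := by rw [hid]
      _ ≤ (C * Dv t * ((v t + (d:ℝ))^m - (m:ℝ) * (v t + (d:ℝ))^(m-1))) * Real.exp (-(v t)) := by
          apply mul_le_mul_of_nonneg_right _ (Real.exp_pos _).le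
          exact mul_le_mul_of_nonneg_left (hkey (v t) hvt) hDvt
      _ = g t := by simp only [hg_def]; ring
  -- limit of F at infinity
  have hvtop : Tendsto (fun t => v t + (d:ℝ)) atTop atTop := by
    apply tendsto_atTop_add_const_right
    have h1 : Tendsto (fun t : ℝ => t / ρ) atTop atTop := tendsto_id.atTop_div_const hρ
    have h2 : Tendsto (fun t : ℝ => (t/ρ)^b) atTop atTop :=
      (tendsto_rpow_atTop hb).comp h1
    simpa only [hv_def] using h2.atTop_div_const hc₀0
  have hFtend : Tendsto F atTop (𝓝 0) := by
    have h0 : Tendsto (fun t => -C * Real.exp (d:ℝ) *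
        (((v t + (d:ℝ)))^m * Real.exp (-(v t + (d:ℝ))))) atTop (𝓝 (-C * Real.exp (d:ℝ) * 0)) :=
      Tendsto.const_mul _ ((tendsto_pow_mul_exp_neg_atTop_nhds_zero m).comp hvtop)
    have heq : ∀ t : ℝ, -C * Real.exp (d:ℝ) *
        ((v t + (d:ℝ))^m * Real.exp (-(v t + (d:ℝ)))) = F t := by
      intro t
      have hexp : Real.exp (d:ℝ) * Real.exp (-(v t + (d:ℝ))) = Real.exp (-(v t)) := by
        rw [← Real.exp_add]; congr 1; ring
      simp only [hF_def]
      calc -C * Real.exp (d:ℝ) * ((v t + (d:ℝ))^m * Real.exp (-(v t + (d:ℝ))))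
          = -C * ((v t + (d:ℝ))^m * (Real.exp (d:ℝ) * Real.exp (-(v t + (d:ℝ))))) := by ring
        _ = -C * ((v t + (d:ℝ))^m * Real.exp (-(v t))) := by rw [hexp]
    have := h0.congr heq
    simpa using this
  have hFt₀ : F t₀ = -C * ((L + (d:ℝ))^m * τ) := by
    simp only [hF_def]
    rw [hvt₀, hexpL]
  -- tail integral
  have hderiv' : ∀ x ∈ Ici t₀, HasDerivAt F (g x) x :=
    fun x hx => hderivF x (lt_of_lt_of_le ht₀ hx)
  have hgpos : ∀ x ∈ Ioi t₀, 0 ≤ g x := fun x hx => hg_nonneg x (lt_trans ht₀ hx)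
  have hgint : IntegrableOn g (Ioi t₀) :=
    integrableOn_Ioi_deriv_of_nonneg' hderiv' hgpos hFtend
  have hgval : ∫ t in Ioi t₀, g t = 0 - F t₀ :=
    integral_Ioi_of_hasDerivAt_of_nonneg' hderiv' hgpos hFtend
  -- integrability of f on the pieces
  have hint1 : IntegrableOn f (Ioc 0 t₀) := by
    refine Integrable.mono' (integrable_const (t₀ * τ)) hf_cont.aestronglyMeasurable.restrict ?_
    refine (ae_restrict_iff' measurableSet_Ioc).2 (ae_of_all _ ?_)
    intro t ht
    rw [Real.norm_eq_abs, abs_of_nonneg (hf_nonneg t ht.1.le)]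
    simp only [hf_def]
    calc t * min τ (Real.exp (-((t / ρ) ^ b) / c₀)) ≤ t * τ :=
        mul_le_mul_of_nonneg_left (min_le_left _ _) ht.1.le
      _ ≤ t₀ * τ := mul_le_mul_of_nonneg_right ht.2 hτ0.le
  have hint2 : IntegrableOn f (Ioi t₀) := by
    refine Integrable.mono' hgint hf_cont.aestronglyMeasurable.restrict ?_
    refine (ae_restrict_iff' measurableSet_Ioi).2 (ae_of_all _ ?_)
    intro t ht
    rw [Real.norm_eq_abs, abs_of_nonneg (hf_nonneg t (lt_trans ht₀ ht).le)]
    exact hfg t ht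
  -- split the integral
  have hsplit : ∫ t in Ioi (0:ℝ), f t = (∫ t in Ioc 0 t₀, f t) + ∫ t in Ioi t₀, f t := by
    rw [← Ioc_union_Ioi_eq_Ioi ht₀.le,
      setIntegral_union (Ioc_disjoint_Ioi le_rfl) measurableSet_Ioi hint1 hint2]
  have hb1 : ∫ t in Ioc 0 t₀, f t ≤ t₀^2/2 * τ := by
    have hval : ∫ t in Ioc 0 t₀, (t * τ) = t₀^2/2*τ := by
      rw [← intervalIntegral.integral_of_le ht₀.le, intervalIntegral.integral_mul_const,
        integral_id]
      ring
    rw [← hval]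
    refine setIntegral_mono_on hint1 ?_ measurableSet_Ioc ?_
    · exact (continuous_id.mul continuous_const).integrableOn_Ioc
    · intro t ht
      simp only [hf_def]
      exact mul_le_mul_of_nonneg_left (min_le_left _ _) ht.1.le
  have hb2 : ∫ t in Ioi t₀, f t ≤ C * ((L + (d:ℝ))^m * τ) := by
    calc ∫ t in Ioi t₀, f t ≤ ∫ t in Ioi t₀, g t :=
        setIntegral_mono_on hint2 hgint measurableSet_Ioi (fun t ht => hfg t ht)
      _ = 0 - F t₀ := hgval
      _ = C * ((L + (d:ℝ))^m * τ) := by rw [hFt₀]; ring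
  -- final arithmetic
  have hRHS : ρ^2 * (c₀*L + c₀*(d:ℝ))^d * τ = ρ^2 * c₀^d * (L+(d:ℝ))^d * τ := by
    rw [← mul_add, mul_pow]
    ring
  have hLd : (0:ℝ) ≤ L + (d:ℝ) := by linarith
  have e1 : t₀^2/2 * τ ≤ ρ^2 * c₀^d * (L+(d:ℝ))^d * τ / 2 := by
    rw [ht₀sq, mul_pow]
    have hpow : L^d ≤ (L+(d:ℝ))^d := pow_le_pow_left₀ hL.le (by linarith) d
    calc ρ^2 * (c₀^d * L^d)/2*τ ≤ ρ^2 * (c₀^d * (L+(d:ℝ))^d)/2*τ := by gcongr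
      _ = ρ^2 * c₀^d * (L+(d:ℝ))^d * τ / 2 := by ring
  have e2 : C * ((L + (d:ℝ))^m * τ) ≤ ρ^2 * c₀^d * (L+(d:ℝ))^d * τ / 2 := by
    have hstep : (d:ℝ) * (L+(d:ℝ))^m ≤ (L+(d:ℝ))^d := by
      calc (d:ℝ) * (L+(d:ℝ))^m ≤ (L+(d:ℝ)) * (L+(d:ℝ))^m := by
            exact mul_le_mul_of_nonneg_right (by linarith) (pow_nonneg hLd m)
        _ = (L+(d:ℝ))^d := by rw [hdm, pow_succ]; ring
    calc C * ((L + (d:ℝ))^m * τ) = ρ^2 * c₀^d * ((d:ℝ) * (L+(d:ℝ))^m) * τ / 2 := by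
          rw [hC_def]; ring
      _ ≤ ρ^2 * c₀^d * (L+(d:ℝ))^d * τ / 2 := by gcongr
  rw [hsplit, hRHS]
  linarith [hb1, hb2, e1, e2]
end

section
/- Let c₀ > 1, d ≥ 2 an even integer (or more generally d ≥ 1), ρ > 0, τ ∈ (0, 1), and define Q(t) = exp(-(t/ρ)^{2/d}/c₀). Then ∫₀^∞ min{τ, Q(t)} dt ≤ 2ρ · (c₀ log(1/τ) + c₀·d/2)^{d/2} · τ. -/
open MeasureTheory Filter Set Topology

/-- derivative helper -/
lemma stmt6_deriv (c₀ β C ρ α : ℝ) (hρ : 0 < ρ) (x : ℝ) (hx : 0 < x) :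
    HasDerivAt (fun t : ℝ => -(C * Real.exp (-(β * ((t / ρ) ^ α / c₀)))))
      (C * β * (α * (x / ρ) ^ (α - 1) / (ρ * c₀)) *
        Real.exp (-(β * ((x / ρ) ^ α / c₀)))) x := by
  have hne : x / ρ ≠ 0 := by positivity
  have h1 : HasDerivAt (fun t : ℝ => t / ρ) (1 / ρ) x := (hasDerivAt_id x).div_const ρ
  have h2 : HasDerivAt (fun t : ℝ => (t / ρ) ^ α) (α * (x / ρ) ^ (α - 1) * (1 / ρ)) x :=
    by have := (Real.hasDerivAt_rpow_const (x := x / ρ) (p := α) (Or.inl hne)).comp x h1; exact this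
  have h3 : HasDerivAt (fun t : ℝ => -(C * Real.exp (-(β * ((t / ρ) ^ α / c₀)))))
      (-(C * (Real.exp (-(β * ((x / ρ) ^ α / c₀))) *
        -(β * (α * (x / ρ) ^ (α - 1) * (1 / ρ) / c₀))))) x :=
    (((h2.div_const c₀).const_mul β).neg.exp.const_mul C).neg
  convert h3 using 1
  ring

/-- key exponent inequality -/
lemma stmt6_ineq (k L m u M : ℝ) (hk : 1 / 2 ≤ k) (hL0 : 0 < L) (hMdef : M = L + k)
    (hm : m = min k 1) (hMu : M ≤ u) :
    -u ≤ Real.log M * (k - 1) + Real.log u * (1 - k) + (1 - k) + -((L + m) / M * u) := by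
  have hM0 : 0 < M := by rw [hMdef]; linarith
  have hu0 : 0 < u := lt_of_lt_of_le hM0 hMu
  have hlogd : Real.log u - Real.log M = Real.log (u / M) := (Real.log_div hu0.ne' hM0.ne').symm
  have hq1 : (1 : ℝ) ≤ u / M := (one_le_div hM0).mpr hMu
  have hlog0 : 0 ≤ Real.log (u / M) := Real.log_nonneg hq1
  have hlog1 : Real.log (u / M) ≤ u / M - 1 := Real.log_le_sub_one_of_pos (by positivity)
  have hKlog : Real.log M * (k - 1) + Real.log u * (1 - k) = Real.log (u / M) * (1 - k) := by
    rw [← hlogd]; ring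
  rcases le_total k 1 with h | h
  · have hm' : m = k := by rw [hm, min_eq_left h]
    have hβ1 : (L + m) / M = 1 := by rw [hm', ← hMdef, div_self hM0.ne']
    rw [hβ1]
    nlinarith [mul_nonneg (sub_nonneg.mpr h) (by linarith : (0:ℝ) ≤ Real.log (u / M) + 1), hKlog]
  · have hm' : m = 1 := by rw [hm, min_eq_right h]
    rw [hm']
    have hZ : (L + 1) / M * u - u = u / M * (1 - k) := by
      field_simp
      rw [hMdef]; ring
    have h2 : (k - 1) * (Real.log (u / M) + 1) ≤ (k - 1) * (u / M) :=
      mul_le_mul_of_nonneg_left (by linarith) (by linarith)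
    nlinarith [h2, hZ, hKlog]

set_option maxHeartbeats 2000000 in
theorem stmt6 (c₀ : ℝ) (hc₀ : 1 < c₀) (d : ℕ) (hd : 1 ≤ d) (ρ τ : ℝ) (hρ : 0 < ρ)
    (hτ0 : 0 < τ) (hτ1 : τ < 1) :
    ∫ t in Set.Ioi (0 : ℝ), min τ (Real.exp (-((t / ρ) ^ (2 / (d : ℝ))) / c₀)) ≤
      2 * ρ * (c₀ * Real.log (1 / τ) + c₀ * d / 2) ^ ((d : ℝ) / 2) * τ := by
  have hc₀0 : (0:ℝ) < c₀ := lt_trans one_pos hc₀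
  have hd1 : (1:ℝ) ≤ (d:ℝ) := by exact_mod_cast hd
  have hd0 : (0:ℝ) < (d:ℝ) := by linarith
  set k : ℝ := (d:ℝ) / 2 with hkdef
  have hk0 : 0 < k := by positivity
  have hkhalf : 1 / 2 ≤ k := by rw [hkdef]; linarith
  set α : ℝ := 2 / (d:ℝ) with hαdef
  have hα0 : 0 < α := by positivity
  have hkα : k * α = 1 := by rw [hkdef, hαdef]; field_simp
  set L : ℝ := Real.log (1 / τ) with hLdef
  have hLeq : L = -Real.log τ := by rw [hLdef, one_div, Real.log_inv]
  have hL0 : 0 < L := by rw [hLeq]; linarith [Real.log_neg hτ0 hτ1]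
  have heL : Real.exp (-L) = τ := by rw [hLeq, neg_neg, Real.exp_log hτ0]
  set m : ℝ := min k 1 with hmdef
  have hm0 : 0 < m := lt_min hk0 one_pos
  have hmk : m ≤ k := min_le_left _ _
  have hm1 : m ≤ 1 := min_le_right _ _
  set M : ℝ := L + k with hMdef
  have hM0 : 0 < M := add_pos hL0 hk0
  have hLm0 : 0 < L + m := add_pos hL0 hm0
  set β : ℝ := (L + m) / M with hβdef
  have hβ0 : 0 < β := div_pos hLm0 hM0
  have hcpk : 0 < c₀ ^ k := Real.rpow_pos_of_pos hc₀0 k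
  have hMk1 : 0 < M ^ (k - 1) := Real.rpow_pos_of_pos hM0 (k - 1)
  set C : ℝ := ρ * c₀ ^ k * k * M ^ (k - 1) * Real.exp (1 - k) / β with hCdef
  have hC0 : 0 < C := by
    apply div_pos _ hβ0
    positivity
  set t₁ : ℝ := ρ * (c₀ * M) ^ k with ht₁def
  have hc₀M : 0 < c₀ * M := mul_pos hc₀0 hM0
  have ht₁0 : 0 < t₁ := mul_pos hρ (Real.rpow_pos_of_pos hc₀M k)
  have hψt₁ : (t₁ / ρ) ^ α / c₀ = M := by
    rw [ht₁def, mul_div_cancel_left₀ _ (ne_of_gt hρ), ← Real.rpow_mul hc₀M.le, hkα,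
      Real.rpow_one, mul_div_cancel_left₀ _ (ne_of_gt hc₀0)]
  have hu_ge : ∀ x : ℝ, t₁ ≤ x → M ≤ (x / ρ) ^ α / c₀ := by
    intro x hx
    rw [← hψt₁]
    have h1 : t₁ / ρ ≤ x / ρ := by gcongr
    have h2 : (t₁ / ρ) ^ α ≤ (x / ρ) ^ α := Real.rpow_le_rpow (by positivity) h1 hα0.le
    gcongr
  -- the dominating function and its derivative
  set F : ℝ → ℝ := fun t => -(C * Real.exp (-(β * ((t / ρ) ^ α / c₀)))) with hFdef
  set F' : ℝ → ℝ := fun x =>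
    C * β * (α * (x / ρ) ^ (α - 1) / (ρ * c₀)) * Real.exp (-(β * ((x / ρ) ^ α / c₀))) with hF'def
  have hderiv : ∀ x ∈ Set.Ici t₁, HasDerivAt F (F' x) x := fun x hx =>
    stmt6_deriv c₀ β C ρ α hρ x (lt_of_lt_of_le ht₁0 hx)
  clear_value k α L m M β C t₁ F F'
  have hF'nonneg : ∀ x ∈ Set.Ioi t₁, 0 ≤ F' x := by
    intro x hx
    rw [hF'def]
    have hx0 : (0:ℝ) < x := lt_trans ht₁0 hx
    have h1 : (0:ℝ) ≤ (x / ρ) ^ (α - 1) := Real.rpow_nonneg (by positivity) _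
    have : (0:ℝ) ≤ C * β * (α * (x / ρ) ^ (α - 1) / (ρ * c₀)) := by positivity
    exact mul_nonneg this (Real.exp_pos _).le
  have htends : Tendsto F atTop (𝓝 0) := by
    rw [hFdef]
    have l1 : Tendsto (fun t : ℝ => t / ρ) atTop atTop := tendsto_id.atTop_div_const hρ
    have l2 : Tendsto (fun t : ℝ => (t / ρ) ^ α) atTop atTop :=
      (tendsto_rpow_atTop hα0).comp l1
    have l3 : Tendsto (fun t : ℝ => (t / ρ) ^ α / c₀) atTop atTop := l2.atTop_div_const hc₀0
    have l4 : Tendsto (fun t : ℝ => β * ((t / ρ) ^ α / c₀)) atTop atTop :=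
      l3.const_mul_atTop hβ0
    have l5 : Tendsto (fun t : ℝ => -(β * ((t / ρ) ^ α / c₀))) atTop atBot :=
      tendsto_neg_atTop_atBot.comp l4
    have l6 : Tendsto (fun t : ℝ => Real.exp (-(β * ((t / ρ) ^ α / c₀)))) atTop (𝓝 0) :=
      Real.tendsto_exp_atBot.comp l5
    have l7 := (l6.const_mul C).neg
    simpa using l7
  have hFTC : ∫ x in Set.Ioi t₁, F' x = 0 - F t₁ :=
    integral_Ioi_of_hasDerivAt_of_nonneg' hderiv hF'nonneg htends
  have hF'int : IntegrableOn F' (Set.Ioi t₁) :=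
    integrableOn_Ioi_deriv_of_nonneg' hderiv hF'nonneg htends
  have hFt₁ : 0 - F t₁ = C * Real.exp (-(β * M)) := by
    rw [hFdef]; simp only; rw [hψt₁]; ring
  -- key pointwise bound
  have key : ∀ x ∈ Set.Ioi t₁, min τ (Real.exp (-((x / ρ) ^ α) / c₀)) ≤ F' x := by
    intro x hx
    have hx0 : (0:ℝ) < x := lt_trans ht₁0 hx
    set u : ℝ := (x / ρ) ^ α / c₀ with hudef
    clear_value u
    have hu : M ≤ u := by rw [hudef]; exact hu_ge x (le_of_lt hx)
    have hu0 : 0 < u := lt_of_lt_of_le hM0 hu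
    have hmin : min τ (Real.exp (-((x / ρ) ^ α) / c₀)) ≤ Real.exp (-u) := by
      rw [neg_div c₀ ((x / ρ) ^ α), ← hudef]
      exact min_le_right _ _
    refine le_trans hmin ?_
    have hxρ : x / ρ = (c₀ * u) ^ k := by
      have h1 : c₀ * u = (x / ρ) ^ α := by rw [hudef]; field_simp
      rw [h1, ← Real.rpow_mul (by positivity), show α * k = 1 by rw [mul_comm]; exact hkα,
        Real.rpow_one]
    have hpow : (x / ρ) ^ (α - 1) = (c₀ * u) ^ (1 - k) := by
      rw [hxρ, ← Real.rpow_mul (mul_pos hc₀0 hu0).le]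
      congr 1
      linear_combination hkα
    have hCβ : C * β = ρ * c₀ ^ k * k * M ^ (k - 1) * Real.exp (1 - k) := by
      rw [hCdef]; exact div_mul_cancel₀ _ (ne_of_gt hβ0)
    have e1 : (c₀ * u) ^ (1 - k : ℝ) = c₀ ^ (1 - k : ℝ) * u ^ (1 - k : ℝ) :=
      Real.mul_rpow hc₀0.le hu0.le
    have e2 : c₀ ^ (k : ℝ) * c₀ ^ (1 - k : ℝ) = c₀ := by
      rw [← Real.rpow_add hc₀0]; norm_num
    have hRHS : F' x = M ^ (k - 1) * u ^ (1 - k : ℝ) * Real.exp (1 - k) *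
        Real.exp (-(β * u)) := by
      have hρ' : ρ ≠ 0 := ne_of_gt hρ
      have hc₀' : c₀ ≠ 0 := ne_of_gt hc₀0
      have hk' : k ≠ 0 := ne_of_gt hk0
      rw [hF'def]; simp only; rw [← hudef, hpow, hCβ, e1]
      field_simp
      linear_combination k * α * e2 + c₀ * hkα
    have hrw : M ^ (k - 1) * u ^ (1 - k : ℝ) * Real.exp (1 - k) * Real.exp (-(β * u)) =
        Real.exp (Real.log M * (k - 1) + Real.log u * (1 - k) + (1 - k) + -(β * u)) := by
      rw [Real.rpow_def_of_pos hM0, Real.rpow_def_of_pos hu0, ← Real.exp_add, ← Real.exp_add,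
        ← Real.exp_add]
    rw [hRHS, hrw, Real.exp_le_exp]
    have := stmt6_ineq k L m u M hkhalf hL0 hMdef hmdef hu
    rw [← hβdef] at this
    linarith
  -- continuity and integrability of the integrand
  have hcont : Continuous (fun t : ℝ => min τ (Real.exp (-((t / ρ) ^ α) / c₀))) := by
    apply Continuous.min continuous_const
    apply Real.continuous_exp.comp
    apply Continuous.div_const
    apply Continuous.neg
    have hcd : Continuous fun t : ℝ => t / ρ := continuous_id.div_const ρ
    exact continuous_iff_continuousAt.mpr fun x =>
      (Real.continuousAt_rpow_const _ _ (Or.inr hα0.le)).comp hcd.continuousAt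
  have hint1 : IntegrableOn (fun t : ℝ => min τ (Real.exp (-((t / ρ) ^ α) / c₀)))
      (Set.Ioc 0 t₁) := hcont.integrableOn_Ioc
  have hint2 : IntegrableOn (fun t : ℝ => min τ (Real.exp (-((t / ρ) ^ α) / c₀)))
      (Set.Ioi t₁) := by
    apply Integrable.mono' hF'int hcont.aestronglyMeasurable.restrict
    filter_upwards [ae_restrict_mem measurableSet_Ioi] with x hx
    rw [Real.norm_eq_abs, abs_of_nonneg (le_min hτ0.le (Real.exp_pos _).le)]
    exact key x hx
  have hsplit : ∫ t in Set.Ioi (0:ℝ), min τ (Real.exp (-((t / ρ) ^ α) / c₀)) =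
      (∫ t in Set.Ioc 0 t₁, min τ (Real.exp (-((t / ρ) ^ α) / c₀))) +
      ∫ t in Set.Ioi t₁, min τ (Real.exp (-((t / ρ) ^ α) / c₀)) := by
    rw [← Set.Ioc_union_Ioi_eq_Ioi ht₁0.le]
    exact setIntegral_union (Set.Ioc_disjoint_Ioi le_rfl) measurableSet_Ioi hint1 hint2
  have hb1 : (∫ t in Set.Ioc 0 t₁, min τ (Real.exp (-((t / ρ) ^ α) / c₀))) ≤ τ * t₁ := by
    have h1 : (∫ t in Set.Ioc 0 t₁, min τ (Real.exp (-((t / ρ) ^ α) / c₀))) ≤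
        ∫ _ in Set.Ioc 0 t₁, τ := by
      apply setIntegral_mono_on hint1 _ measurableSet_Ioc (fun x _ => min_le_left _ _)
      exact integrableOn_const measure_Ioc_lt_top.ne
    have h2 : (∫ _ in Set.Ioc (0:ℝ) t₁, τ) = τ * t₁ := by
      simp [Real.volume_Ioc, ENNReal.toReal_ofReal ht₁0.le, mul_comm, ht₁0.le]
    linarith
  have hb2 : (∫ t in Set.Ioi t₁, min τ (Real.exp (-((t / ρ) ^ α) / c₀))) ≤
      C * Real.exp (-(β * M)) := by
    have h1 := setIntegral_mono_on hint2 hF'int measurableSet_Ioi key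
    rw [hFTC, hFt₁] at h1
    exact h1
  -- final tail bound
  have hfact : k * Real.exp (1 - k - m) ≤ L + m := by
    rcases le_total k 1 with h | h
    · have hmm : m = k := by rw [hmdef]; exact min_eq_left h
      rw [hmm]
      have h1 : Real.exp (1 - k - k) ≤ 1 := Real.exp_le_one_iff.mpr (by linarith)
      nlinarith
    · have hmm : m = 1 := by rw [hmdef]; exact min_eq_right h
      rw [hmm]
      have h1 : k ≤ Real.exp k := by linarith [Real.add_one_le_exp k]
      have h2 : k * Real.exp (1 - k - 1) ≤ 1 := by
        rw [show (1 - k - 1 : ℝ) = -k by ring, Real.exp_neg]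
        calc k * (Real.exp k)⁻¹ ≤ Real.exp k * (Real.exp k)⁻¹ := by gcongr
          _ = 1 := mul_inv_cancel₀ (Real.exp_pos k).ne'
      linarith
  have hMk : M ^ (k - 1 : ℝ) * M = M ^ (k : ℝ) := by
    rw [← Real.rpow_add_one hM0.ne' (k - 1)]; norm_num
  have hexp : Real.exp (1 - k) * Real.exp (-(β * M)) = τ * Real.exp (1 - k - m) := by
    have hβM : β * M = L + m := by rw [hβdef]; exact div_mul_cancel₀ _ (ne_of_gt hM0)
    rw [hβM, ← Real.exp_add, ← heL, ← Real.exp_add]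
    ring_nf
  have htail : C * Real.exp (-(β * M)) ≤ ρ * c₀ ^ k * M ^ k * τ := by
    have hC' : C * Real.exp (-(β * M)) =
        ρ * c₀ ^ k * (M ^ (k - 1 : ℝ) * M) * (Real.exp (1 - k) * Real.exp (-(β * M))) * k /
          (L + m) := by
      rw [hCdef, hβdef]
      field_simp
    rw [hC', hMk, hexp]
    rw [div_le_iff₀ hLm0]
    have hMpk : 0 < M ^ (k : ℝ) := Real.rpow_pos_of_pos hM0 k
    calc ρ * c₀ ^ k * M ^ (k:ℝ) * (τ * Real.exp (1 - k - m)) * k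
        = (ρ * c₀ ^ k * M ^ (k:ℝ) * τ) * (k * Real.exp (1 - k - m)) := by ring
      _ ≤ (ρ * c₀ ^ k * M ^ (k:ℝ) * τ) * (L + m) := by
          apply mul_le_mul_of_nonneg_left hfact
          positivity
      _ = ρ * c₀ ^ k * M ^ (k:ℝ) * τ * (L + m) := rfl
  -- conclude
  have hmulpow : (c₀ * M) ^ (k : ℝ) = c₀ ^ (k : ℝ) * M ^ (k : ℝ) :=
    Real.mul_rpow hc₀0.le hM0.le
  have hRHSeq : 2 * ρ * (c₀ * L + c₀ * (d:ℝ) / 2) ^ (k : ℝ) * τ =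
      2 * ρ * (c₀ * M) ^ (k : ℝ) * τ := by
    rw [show c₀ * L + c₀ * (d:ℝ) / 2 = c₀ * M by rw [hMdef, hkdef]; ring]
  rw [hsplit, hRHSeq]
  have ht₁τ : τ * t₁ = ρ * (c₀ * M) ^ (k:ℝ) * τ := by rw [ht₁def]; ring
  have hmulpow' : ρ * c₀ ^ (k:ℝ) * M ^ (k:ℝ) * τ = ρ * (c₀ * M) ^ (k:ℝ) * τ := by
    rw [hmulpow]; ring
  linarith [hb1, hb2, htail, hmulpow', ht₁τ]
end

section
/- Let S and S' be finite sets with |S'| ≥ α|S| for some α ∈ (0, 1]. Suppose g: X → ℝ and t₀ > 0 satisfy: (fraction of x ∈ S with g(x) ≥ t₀) ≤ h₁, (fraction of x ∈ S' with g(x) ≥ t₀) > h₂, and h₂ ≥ (3/α)·h₁. Let S'' = {x ∈ S' : g(x) < t₀}. Then Δ(S, S'') ≤ Δ(S, S') - h₁, where Δ(A, B) = (|A \ B| + |B \ A|)/|A|. -/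
theorem stmt8 {X : Type*} [DecidableEq X] (S S' : Finset X) (hS : S.Nonempty)
    (g : X → ℝ) (α h₁ h₂ t₀ : ℝ) (hα0 : 0 < α) (hα1 : α ≤ 1) (hh₁ : 0 < h₁) (hh₂ : 0 < h₂)
    (ht₀ : 0 < t₀)
    (hsize : α * S.card ≤ (S'.card : ℝ))
    (hfrac1 : ((S.filter (fun x => t₀ ≤ g x)).card : ℝ) / S.card ≤ h₁)
    (hfrac2 : h₂ < ((S'.filter (fun x => t₀ ≤ g x)).card : ℝ) / S'.card)
    (h32 : (3 / α) * h₁ ≤ h₂) :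
    ((((S \ (S'.filter (fun x => g x < t₀))).card
        + ((S'.filter (fun x => g x < t₀)) \ S).card : ℕ)) : ℝ) / S.card
      ≤ ((((S \ S').card + (S' \ S).card : ℕ)) : ℝ) / S.card - h₁ := by
  classical
  set F := S'.filter (fun x => g x < t₀) with hF
  set R := S'.filter (fun x => t₀ ≤ g x) with hR
  have hc : (0 : ℝ) < S.card := by
    exact_mod_cast Finset.card_pos.mpr hS
  have hS' : (0 : ℝ) < S'.card := by
    rcases Nat.eq_zero_or_pos S'.card with h | h
    · exfalso
      have hE : S' = ∅ := Finset.card_eq_zero.mp h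
      simp [hE] at hfrac2
      linarith
    · exact_mod_cast h
  -- set identities
  have e1 : S \ F = (S \ S') ∪ (S ∩ R) := by
    ext x
    simp only [hF, hR, Finset.mem_sdiff, Finset.mem_union, Finset.mem_inter,
      Finset.mem_filter, not_and, not_lt]
    constructor
    · rintro ⟨hx, h2⟩
      by_cases hx' : x ∈ S'
      · exact Or.inr ⟨hx, hx', h2 hx'⟩
      · exact Or.inl ⟨hx, hx'⟩
    · rintro (⟨hx, hx'⟩ | ⟨hx, hx', hg⟩)
      · exact ⟨hx, fun h => absurd h hx'⟩
      · exact ⟨hx, fun _ => hg⟩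
  have d1 : Disjoint (S \ S') (S ∩ R) := by
    rw [Finset.disjoint_left]
    intro x hx hx'
    simp only [hF, hR, Finset.mem_sdiff, Finset.mem_inter, Finset.mem_filter] at hx hx'
    exact hx.2 hx'.2.1
  have c1 : (S \ F).card = (S \ S').card + (S ∩ R).card := by
    rw [e1, Finset.card_union_of_disjoint d1]
  have e2 : (F \ S) ∪ (R \ S) = S' \ S := by
    ext x
    simp only [hF, hR, Finset.mem_sdiff, Finset.mem_union, Finset.mem_filter]
    constructor
    · rintro (⟨⟨h1, _⟩, h2⟩ | ⟨⟨h1, _⟩, h2⟩) <;> exact ⟨h1, h2⟩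
    · rintro ⟨h1, h2⟩
      rcases lt_or_ge (g x) t₀ with h | h
      · exact Or.inl ⟨⟨h1, h⟩, h2⟩
      · exact Or.inr ⟨⟨h1, h⟩, h2⟩
  have d2 : Disjoint (F \ S) (R \ S) := by
    rw [Finset.disjoint_left]
    intro x hx hx'
    simp only [hF, hR, Finset.mem_sdiff, Finset.mem_filter] at hx hx'
    exact absurd hx'.1.2 (not_le.mpr hx.1.2)
  have c2 : (F \ S).card + (R \ S).card = (S' \ S).card := by
    rw [← Finset.card_union_of_disjoint d2, e2]
  have c3 : (S ∩ R).card ≤ (S.filter (fun x => t₀ ≤ g x)).card := by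
    apply Finset.card_le_card
    intro x hx
    simp only [hR, Finset.mem_inter, Finset.mem_filter] at hx ⊢
    exact ⟨hx.1, hx.2.2⟩
  have c4 : (R ∩ S).card + (R \ S).card = R.card := by
    rw [Finset.card_inter_add_card_sdiff]
  have c5 : (S ∩ R).card = (R ∩ S).card := by rw [Finset.inter_comm]
  -- real inequalities
  have r1 : ((S.filter (fun x => t₀ ≤ g x)).card : ℝ) ≤ h₁ * S.card := by
    have := (div_le_iff₀ hc).mp hfrac1
    linarith
  have r2 : h₂ * S'.card < (R.card : ℝ) := by
    have := (lt_div_iff₀ hS').mp hfrac2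
    linarith
  have r3 : 3 * h₁ * S.card ≤ h₂ * S'.card := by
    have h32' : 3 * h₁ ≤ α * h₂ := by
      have h' := mul_le_mul_of_nonneg_left h32 hα0.le
      rw [show α * (3 / α * h₁) = 3 * h₁ by field_simp] at h'
      exact h'
    calc 3 * h₁ * (S.card : ℝ) ≤ α * h₂ * S.card := by
          apply mul_le_mul_of_nonneg_right h32' (le_of_lt hc)
      _ = h₂ * (α * S.card) := by ring
      _ ≤ h₂ * S'.card := by
          apply mul_le_mul_of_nonneg_left hsize (le_of_lt hh₂)
  -- conclude
  rw [div_sub' (ne_of_gt hc), div_le_div_iff₀ hc hc]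
  have key : ((S \ F).card : ℝ) + (F \ S).card ≤ ((S \ S').card : ℝ) + (S' \ S).card - h₁ * S.card := by
    have c1' : ((S \ F).card : ℝ) = (S \ S').card + (S ∩ R).card := by exact_mod_cast c1
    have c2' : ((F \ S).card : ℝ) + (R \ S).card = (S' \ S).card := by exact_mod_cast c2
    have c3' : ((S ∩ R).card : ℝ) ≤ ((S.filter (fun x => t₀ ≤ g x)).card : ℝ) := by exact_mod_cast c3
    have c4' : ((R ∩ S).card : ℝ) + (R \ S).card = (R.card : ℝ) := by exact_mod_cast c4
    have c5' : ((S ∩ R).card : ℝ) = ((R ∩ S).card : ℝ) := by exact_mod_cast c5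
    linarith
  push_cast
  nlinarith [key, hc]
end

section
/- Let w ∈ ℝⁿ and let u ∈ ℝⁿ be k-sparse (at most k nonzero coordinates). If |⟨v, w - u⟩| ≤ ε for all unit vectors v ∈ ℝⁿ with at most 2k nonzero coordinates, then ‖Hₖ(w) - u‖₂ ≤ 3ε, where Hₖ(w) is the vector obtained from w by keeping its k largest-magnitude coordinates and setting the rest to zero. -/
theorem stmt11 {n k : ℕ} (hk : k ≤ n) (w u : Fin n → ℝ) (ε : ℝ) (hε : 0 < ε)
    (hu : (Finset.univ.filter (fun i => u i ≠ 0)).card ≤ k)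
    (Λ : Finset (Fin n)) (hΛcard : Λ.card = k)
    (hΛ : ∀ i ∈ Λ, ∀ j ∉ Λ, |w j| ≤ |w i|)
    (hv : ∀ v : Fin n → ℝ, (Finset.univ.filter (fun i => v i ≠ 0)).card ≤ 2 * k →
      (∑ i, (v i) ^ 2) = 1 → |∑ i, v i * (w i - u i)| ≤ ε) :
    Real.sqrt (∑ i, ((if i ∈ Λ then w i else 0) - u i) ^ 2) ≤ 3 * ε := by
  classical
  set S : Finset (Fin n) := Finset.univ.filter (fun i => u i ≠ 0) with hS
  have huS : ∀ i, i ∉ S → u i = 0 := by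
    intro i hi
    by_contra h
    exact hi (by simp [hS, h])
  -- Key lemma: restriction of w - u to any set of card ≤ 2k has ℓ² norm ≤ ε
  have key : ∀ T : Finset (Fin n), T.card ≤ 2 * k →
      Real.sqrt (∑ i ∈ T, (w i - u i) ^ 2) ≤ ε := by
    intro T hT
    set Ssq : ℝ := ∑ i ∈ T, (w i - u i) ^ 2 with hSsq
    have hSsqnn : 0 ≤ Ssq := Finset.sum_nonneg fun i _ => sq_nonneg _
    set s : ℝ := Real.sqrt Ssq with hsdef
    have hsnn : 0 ≤ s := Real.sqrt_nonneg _
    have hs2 : s ^ 2 = Ssq := Real.sq_sqrt hSsqnn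
    rcases eq_or_lt_of_le hsnn with h0 | hpos
    · linarith
    set v : Fin n → ℝ := fun i => (if i ∈ T then w i - u i else 0) / s with hvdef
    have hsupp : (Finset.univ.filter (fun i => v i ≠ 0)).card ≤ 2 * k := by
      refine le_trans (Finset.card_le_card ?_) hT
      intro i hi
      simp only [Finset.mem_filter, hvdef] at hi
      by_contra h
      exact hi.2 (by simp [h])
    have hite : ∀ i, (if i ∈ T then w i - u i else 0) ^ 2
        = (if i ∈ T then (w i - u i) ^ 2 else 0) := by
      intro i; split <;> simp
    have hsumsq : (∑ i, (if i ∈ T then w i - u i else 0) ^ 2) = Ssq := by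
      simp only [hite]
      rw [Finset.sum_ite_mem, Finset.univ_inter]
    have hnorm : (∑ i, (v i) ^ 2) = 1 := by
      simp only [hvdef, div_pow, ← Finset.sum_div, hsumsq]
      rw [hs2]
      exact div_self (hs2 ▸ pow_ne_zero 2 (ne_of_gt hpos))
    have hdot : (∑ i, v i * (w i - u i)) = s := by
      have : ∀ i, v i * (w i - u i)
          = (if i ∈ T then (w i - u i) ^ 2 else 0) / s := by
        intro i
        simp only [hvdef]
        split <;> ring
      simp only [this, ← Finset.sum_div]
      rw [Finset.sum_ite_mem, Finset.univ_inter, ← hSsq, ← hs2, sq,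
        mul_div_assoc, div_self (ne_of_gt hpos), mul_one]
    have := hv v hsupp hnorm
    rw [hdot, abs_of_nonneg hsnn] at this
    exact this
  -- setup
  set A : Finset (Fin n) := Λ ∪ S with hA
  have hAcard : A.card ≤ 2 * k := by
    calc A.card ≤ Λ.card + S.card := Finset.card_union_le _ _
    _ ≤ k + k := by omega
    _ = 2 * k := by ring
  -- Euclidean space vectors
  set P : EuclideanSpace ℝ (Fin n) :=
    WithLp.toLp 2 (fun i => (if i ∈ Λ then w i else 0) - (if i ∈ A then w i else 0)) with hP
  set Q : EuclideanSpace ℝ (Fin n) :=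
    WithLp.toLp 2 (fun i => (if i ∈ A then w i else 0) - u i) with hQ
  have hnormeq : ∀ x : EuclideanSpace ℝ (Fin n),
      ‖x‖ = Real.sqrt (∑ i, (x i) ^ 2) := by
    intro x
    rw [EuclideanSpace.norm_eq]
    congr 1
    refine Finset.sum_congr rfl fun i _ => by rw [Real.norm_eq_abs, sq_abs]
  have hgoal : Real.sqrt (∑ i, ((if i ∈ Λ then w i else 0) - u i) ^ 2)
      = ‖P + Q‖ := by
    rw [hnormeq]
    congr 1
    refine Finset.sum_congr rfl fun i _ => ?_
    have : (P + Q) i = (if i ∈ Λ then w i else 0) - u i := by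
      show P i + Q i = _
      simp only [hP, hQ, PiLp.toLp_apply]
      ring
    rw [this]
  -- bound on Q
  have hQbound : ‖Q‖ ≤ ε := by
    rw [hnormeq]
    have : (∑ i, (Q i) ^ 2) = ∑ i ∈ A, (w i - u i) ^ 2 := by
      have h1 : ∀ i, (Q i) ^ 2 = (if i ∈ A then (w i - u i) ^ 2 else 0) := by
        intro i
        simp only [hQ, PiLp.toLp_apply]
        by_cases h : i ∈ A
        · simp [h]
        · have hu0 : u i = 0 := huS i (fun hiS => h (Finset.mem_union_right _ hiS))
          simp [h, hu0]
      simp only [h1]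
      rw [Finset.sum_ite_mem, Finset.univ_inter]
    rw [this]
    exact key A hAcard
  -- bound on P
  have hPbound : ‖P‖ ≤ ε := by
    have hPsq : (∑ i, (P i) ^ 2) = ∑ i ∈ S \ Λ, (w i) ^ 2 := by
      have h1 : ∀ i, (P i) ^ 2 = (if i ∈ S \ Λ then (w i) ^ 2 else 0) := by
        intro i
        simp only [hP, hA, PiLp.toLp_apply]
        by_cases hiΛ : i ∈ Λ <;> by_cases hiS : i ∈ S <;>
          simp [hiΛ, hiS, Finset.mem_sdiff]
      simp only [h1]
      rw [Finset.sum_ite_mem, Finset.univ_inter]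
    -- compare with Λ \ S
    have hcard : (S \ Λ).card ≤ (Λ \ S).card := by
      have h1 : (S \ Λ).card + (S ∩ Λ).card = S.card :=
        Finset.card_sdiff_add_card_inter S Λ
      have h2 : (Λ \ S).card + (Λ ∩ S).card = Λ.card :=
        Finset.card_sdiff_add_card_inter Λ S
      have h3 : (S ∩ Λ).card = (Λ ∩ S).card := by rw [Finset.inter_comm]
      omega
    have hcmp : (∑ i ∈ S \ Λ, (w i) ^ 2) ≤ ∑ i ∈ Λ \ S, (w i) ^ 2 := by
      rcases Finset.eq_empty_or_nonempty (S \ Λ) with he | hne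
      · simp only [he, Finset.sum_empty]
        exact Finset.sum_nonneg fun i _ => sq_nonneg _
      · have hΛSne : (Λ \ S).Nonempty := by
          rw [← Finset.card_pos] at hne ⊢
          omega
        obtain ⟨i₀, hi₀, hmin⟩ := Finset.exists_min_image (Λ \ S) (fun i => (w i) ^ 2) hΛSne
        have hi₀Λ : i₀ ∈ Λ := (Finset.mem_sdiff.mp hi₀).1
        have step1 : (∑ i ∈ S \ Λ, (w i) ^ 2) ≤ ((S \ Λ).card : ℝ) * (w i₀) ^ 2 := by
          rw [← nsmul_eq_mul, ← Finset.sum_const]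
          refine Finset.sum_le_sum fun j hj => ?_
          have hjΛ : j ∉ Λ := (Finset.mem_sdiff.mp hj).2
          have hwle := hΛ i₀ hi₀Λ j hjΛ
          calc (w j) ^ 2 = |w j| ^ 2 := by rw [sq_abs]
          _ ≤ |w i₀| ^ 2 := pow_le_pow_left₀ (abs_nonneg _) hwle 2
          _ = (w i₀) ^ 2 := by rw [sq_abs]
        have step2 : ((Λ \ S).card : ℝ) * (w i₀) ^ 2 ≤ ∑ i ∈ Λ \ S, (w i) ^ 2 := by
          rw [← nsmul_eq_mul]
          exact Finset.card_nsmul_le_sum _ _ _ fun j hj => hmin j hj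
        have hc : ((S \ Λ).card : ℝ) * (w i₀) ^ 2 ≤ ((Λ \ S).card : ℝ) * (w i₀) ^ 2 := by
          apply mul_le_mul_of_nonneg_right _ (sq_nonneg _)
          exact_mod_cast hcard
        calc (∑ i ∈ S \ Λ, (w i) ^ 2) ≤ ((S \ Λ).card : ℝ) * (w i₀) ^ 2 := step1
        _ ≤ ((Λ \ S).card : ℝ) * (w i₀) ^ 2 := hc
        _ ≤ ∑ i ∈ Λ \ S, (w i) ^ 2 := step2
    have heq : (∑ i ∈ Λ \ S, (w i) ^ 2) = ∑ i ∈ Λ \ S, (w i - u i) ^ 2 := by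
      refine Finset.sum_congr rfl fun i hi => ?_
      have : u i = 0 := huS i (Finset.mem_sdiff.mp hi).2
      rw [this, sub_zero]
    have hΛScard : (Λ \ S).card ≤ 2 * k := by
      have : (Λ \ S).card ≤ Λ.card := Finset.card_le_card (Finset.sdiff_subset)
      omega
    rw [hnormeq, hPsq]
    calc Real.sqrt (∑ i ∈ S \ Λ, (w i) ^ 2)
        ≤ Real.sqrt (∑ i ∈ Λ \ S, (w i - u i) ^ 2) := by
          apply Real.sqrt_le_sqrt
          rw [← heq]; exact hcmp
    _ ≤ ε := key (Λ \ S) hΛScard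
  rw [hgoal]
  calc ‖P + Q‖ ≤ ‖P‖ + ‖Q‖ := norm_add_le _ _
  _ ≤ ε + ε := add_le_add hPbound hQbound
  _ ≤ 3 * ε := by linarith
end

section
/- Let D be a probability distribution on ℝⁿ, X_γ ⊆ ℝⁿ a measurable set with P_{x∼D}(x ∈ X_γ) ≥ 1/2, and ρ > 0. Then for all measurable f: ℝⁿ → [-1, 1] and all measurable p: ℝⁿ → ℝ with E_D[p²] ≤ ρ², we have |E_{x∼D}[f(x)p(x)] - E_{x∼D|X_γ}[f(x)p(x)]| ≤ 4ρ·√(P_{x∼D}(x ∉ X_γ)), where D|X_γ denotes D conditioned on the event x ∈ X_γ. -/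
open MeasureTheory

-- Cauchy–Schwarz: ∫ |p| over a set is bounded by √(∫ p²) · √(μ s)
lemma aux_cs {α : Type*} {m : MeasurableSpace α} (μ : Measure α) [IsProbabilityMeasure μ]
    {p : α → ℝ} (hp : Measurable p) (hp2int : Integrable (fun x => (p x) ^ 2) μ)
    {s : Set α} (hs : MeasurableSet s) :
    ∫ x in s, |p x| ∂μ ≤ Real.sqrt (∫ x, (p x) ^ 2 ∂μ) * Real.sqrt ((μ s).toReal) := by
  have hpm2 : MemLp p 2 μ := (memLp_two_iff_integrable_sq hp.aestronglyMeasurable).mpr hp2int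
  have hind : MemLp (s.indicator (fun _ => (1 : ℝ))) 2 μ := (memLp_const 1).indicator hs
  have hconj : Real.HolderConjugate 2 2 := Real.HolderConjugate.two_two
  have key := integral_mul_le_Lp_mul_Lq_of_nonneg hconj
    (μ := μ) (f := fun x => |p x|) (g := s.indicator (fun _ => (1 : ℝ)))
    (Filter.Eventually.of_forall fun x => abs_nonneg _)
    (Filter.Eventually.of_forall fun x => Set.indicator_nonneg (fun _ _ => zero_le_one) x)
    (by rw [ENNReal.ofReal_ofNat]; exact hpm2.abs) (by simpa [ENNReal.ofReal_ofNat] using hind)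
  have h1 : ∫ x, |p x| * s.indicator (fun _ => (1 : ℝ)) x ∂μ = ∫ x in s, |p x| ∂μ := by
    rw [← integral_indicator hs]
    congr 1
    ext x
    by_cases hx : x ∈ s <;> simp [hx]
  have h2 : ∫ x, |p x| ^ (2 : ℝ) ∂μ = ∫ x, (p x) ^ 2 ∂μ := by
    congr 1
    ext x
    rw [show ((2 : ℝ)) = ((2 : ℕ) : ℝ) by norm_num, Real.rpow_natCast, sq_abs]
  have h3 : ∫ x, (s.indicator (fun _ => (1 : ℝ)) x) ^ (2 : ℝ) ∂μ = (μ s).toReal := by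
    have : ∀ x, (s.indicator (fun _ => (1 : ℝ)) x) ^ (2 : ℝ)
        = s.indicator (fun _ => (1 : ℝ)) x := by
      intro x
      by_cases hx : x ∈ s <;> simp [hx, Real.rpow_natCast]
    simp only [this]
    rw [integral_indicator_const _ hs]
    simp [Measure.real]
  rw [h1, h2, h3] at key
  calc ∫ x in s, |p x| ∂μ
      ≤ (∫ x, (p x) ^ 2 ∂μ) ^ (1 / (2:ℝ)) * ((μ s).toReal) ^ (1 / (2:ℝ)) := key
    _ = Real.sqrt (∫ x, (p x) ^ 2 ∂μ) * Real.sqrt ((μ s).toReal) := by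
        rw [Real.sqrt_eq_rpow, Real.sqrt_eq_rpow]

theorem stmt12 {n : ℕ} (μ : Measure (Fin n → ℝ)) [IsProbabilityMeasure μ]
    (Xγ : Set (Fin n → ℝ)) (hXm : MeasurableSet Xγ) (hXp : 1 / 2 ≤ (μ Xγ).toReal)
    (ρ : ℝ) (hρ : 0 < ρ)
    (f p : (Fin n → ℝ) → ℝ) (hf : Measurable f) (hfb : ∀ x, |f x| ≤ 1)
    (hp : Measurable p) (hp2int : Integrable (fun x => (p x) ^ 2) μ)
    (hp2 : ∫ x, (p x) ^ 2 ∂μ ≤ ρ ^ 2) :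
    |(∫ x, f x * p x ∂μ) - ∫ x, f x * p x ∂(ProbabilityTheory.cond μ Xγ)| ≤
      4 * ρ * Real.sqrt ((μ Xγᶜ).toReal) := by
  set c := (μ Xγ).toReal with hc
  set ε := (μ Xγᶜ).toReal with hε
  have hsum : c + ε = 1 := by
    rw [hc, hε, ← ENNReal.toReal_add (measure_ne_top μ _) (measure_ne_top μ _),
      measure_add_measure_compl hXm, measure_univ]
    rfl
  have hεnn : 0 ≤ ε := ENNReal.toReal_nonneg
  have hε1 : ε ≤ 1 / 2 := by linarith
  have hcpos : (0 : ℝ) < c := by linarith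
  -- integrability
  have hpm2 : MemLp p 2 μ := (memLp_two_iff_integrable_sq hp.aestronglyMeasurable).mpr hp2int
  have hpint : Integrable p μ := hpm2.integrable (by norm_num)
  have hgint : Integrable (fun x => f x * p x) μ := by
    refine Integrable.mono hpint ((hf.mul hp).aestronglyMeasurable)
      (Filter.Eventually.of_forall fun x => ?_)
    simp only [Real.norm_eq_abs, abs_mul]
    exact mul_le_of_le_one_left (abs_nonneg _) (hfb x)
  set A := ∫ x in Xγ, f x * p x ∂μ with hA
  set B := ∫ x in Xγᶜ, f x * p x ∂μ with hB
  have hsplit : ∫ x, f x * p x ∂μ = A + B :=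
    (integral_add_compl hXm hgint).symm
  have hcond : ∫ x, f x * p x ∂(ProbabilityTheory.cond μ Xγ) = c⁻¹ * A := by
    rw [ProbabilityTheory.cond, integral_smul_measure, ENNReal.toReal_inv]
    rfl
  -- pointwise bound on set integrals
  have habs : ∀ s : Set (Fin n → ℝ), MeasurableSet s →
      |∫ x in s, f x * p x ∂μ| ≤ ∫ x in s, |p x| ∂μ := by
    intro s hs
    rw [← Real.norm_eq_abs]
    refine (norm_integral_le_integral_norm _).trans ?_
    simp only [Real.norm_eq_abs]
    refine integral_mono_of_nonneg (Filter.Eventually.of_forall fun x => abs_nonneg _)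
      (hpint.abs.restrict) (Filter.Eventually.of_forall fun x => ?_)
    simp only [abs_mul]
    exact mul_le_of_le_one_left (abs_nonneg _) (hfb x)
  have hsq : Real.sqrt (∫ x, (p x) ^ 2 ∂μ) ≤ ρ := by
    calc Real.sqrt (∫ x, (p x) ^ 2 ∂μ) ≤ Real.sqrt (ρ ^ 2) := Real.sqrt_le_sqrt hp2
      _ = ρ := Real.sqrt_sq hρ.le
  have hsqε : Real.sqrt ε ≥ 0 := Real.sqrt_nonneg _
  have hεle : ε ≤ Real.sqrt ε := by
    nlinarith [Real.sq_sqrt hεnn, Real.sqrt_nonneg ε]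
  -- bound |A|
  have hAbound : |A| ≤ ρ := by
    refine (habs Xγ hXm).trans ?_
    calc ∫ x in Xγ, |p x| ∂μ
        ≤ Real.sqrt (∫ x, (p x) ^ 2 ∂μ) * Real.sqrt ((μ Xγ).toReal) := aux_cs μ hp hp2int hXm
      _ ≤ ρ * 1 := by
          refine mul_le_mul hsq ?_ (Real.sqrt_nonneg _) hρ.le
          rw [show (1:ℝ) = Real.sqrt 1 by simp]
          refine Real.sqrt_le_sqrt ?_
          rw [← hc]; linarith
      _ = ρ := mul_one ρ
  -- bound |B|
  have hBbound : |B| ≤ ρ * Real.sqrt ε := by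
    refine (habs Xγᶜ hXm.compl).trans ?_
    calc ∫ x in Xγᶜ, |p x| ∂μ
        ≤ Real.sqrt (∫ x, (p x) ^ 2 ∂μ) * Real.sqrt ε := aux_cs μ hp hp2int hXm.compl
      _ ≤ ρ * Real.sqrt ε := mul_le_mul_of_nonneg_right hsq hsqε
  -- combine
  rw [hsplit, hcond]
  have hcinv : c⁻¹ - 1 = ε / c := by
    field_simp
    linarith
  have h2ε : ε / c ≤ 2 * ε := by
    rw [div_le_iff₀ hcpos]
    nlinarith
  have hexp : A + B - c⁻¹ * A = B - (c⁻¹ - 1) * A := by ring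
  rw [hexp, hcinv]
  calc |B - ε / c * A| ≤ |B| + (ε / c) * |A| := by
        refine (abs_sub _ _).trans ?_
        rw [abs_mul, abs_of_nonneg (div_nonneg hεnn hcpos.le)]
    _ ≤ ρ * Real.sqrt ε + (2 * ε) * ρ := by
        refine add_le_add hBbound ?_
        refine mul_le_mul h2ε hAbound (abs_nonneg _) (by linarith)
    _ ≤ 4 * ρ * Real.sqrt ε := by nlinarith
end
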